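/- arXiv:1706.01431 — 4 statements merged into one kernel-verified Lean document; each statement's English description precedes it below -/
import Mathlib

section
/- Let G be a finite group and let H, K be subgroups of G such that H·H^x = H^x·H (as sets) for every x ∈ K. If H < K (H is a proper subgroup of K), then H^K < K, i.e., the normal closure of H under conjugation by K is a proper subgroup of K. -/
/-!
Let `T` be maximal among the proper subgroups of `K` that contain `H` and permute with every
conjugate `H^y`, `y ∈ K`. Conjugating the hypothesis shows that the conjugates `H^y` permute
pairwise, so `T ⊔ H^y = T H^y` again permutes with all of them. It is a proper subgroup of `K`:
otherwise `K = K y = T y⁻¹ H` is a single `(T, H)`-double coset containing `1`, hence equal to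
`T H = T`. Maximality then gives `H^y ≤ T` for all `y ∈ K`, so `H^K ≤ T < K`.
-/

open Pointwise

/-- The conjugate subgroup `H^x = x⁻¹ H x`. -/
def conjSub {G : Type*} [Group G] (H : Subgroup G) (x : G) : Subgroup G :=
  Subgroup.map ((MulAut.conj x⁻¹).toMonoidHom) H

namespace Subgroup

variable {G : Type*} [Group G]

def Permutable (A B : Subgroup G) : Prop :=
  (A : Set G) * B = B * A

namespace Permutable

variable {A B C : Subgroup G}

theorem coe_sup (h : A.Permutable B) : ((A ⊔ B : Subgroup G) : Set G) = A * B := by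
  let AB : Subgroup G :=
    { carrier := (A : Set G) * B
      one_mem' := ⟨1, A.one_mem, 1, B.one_mem, one_mul 1⟩
      mul_mem' := fun {x y} hx hy => by
        have hAB : (A : Set G) * B * (A * B) = A * B := calc
          (A : Set G) * B * (A * B) = A * (B * A) * B := by simp only [mul_assoc]
          _ = A * A * (B * B) := by rw [← h]; simp only [mul_assoc]
          _ = A * B := by rw [coe_mul_coe, coe_mul_coe]
        exact hAB ▸ Set.mul_mem_mul hx hy
      inv_mem' := fun {x} hx => by
        have hAB : ((A : Set G) * B)⁻¹ = A * B := by
          rw [mul_inv_rev, inv_coe_set, inv_coe_set, h]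
        exact hAB ▸ Set.inv_mem_inv.mpr hx }
  have hle : A ⊔ B ≤ AB :=
    sup_le (fun a ha => ⟨a, ha, 1, B.one_mem, mul_one a⟩)
      fun b hb => ⟨1, A.one_mem, b, hb, one_mul b⟩
  refine le_antisymm hle ?_
  rintro - ⟨a, ha, b, hb, rfl⟩
  exact mul_mem (mem_sup_left ha) (mem_sup_right hb)

theorem sup_left (hAB : A.Permutable B) (hAC : A.Permutable C) (hBC : B.Permutable C) :
    (A ⊔ B).Permutable C := by
  unfold Permutable at hAC hBC
  rw [Permutable, hAB.coe_sup, mul_assoc, hBC, ← mul_assoc, hAC, mul_assoc]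

theorem conjSub (h : A.Permutable B) (x : G) : (conjSub A x).Permutable (conjSub B x) := by
  unfold Permutable
  simp only [_root_.conjSub, coe_map, ← Set.image_mul]
  rw [h]

end Permutable

end Subgroup

section conjSub

variable {G : Type*} [Group G] {H K T : Subgroup G}

theorem conjSub_eq_smul (x : G) : conjSub H x = MulAut.conj x⁻¹ • H := rfl

theorem mem_conjSub {x g : G} : g ∈ conjSub H x ↔ x * g * x⁻¹ ∈ H := by
  rw [conjSub_eq_smul, Subgroup.mem_pointwise_smul_iff_inv_smul_mem]; simp

theorem conjSub_conjSub (a b : G) : conjSub (conjSub H a) b = conjSub H (a * b) := by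
  simp only [conjSub, Subgroup.map_map, mul_inv_rev, map_mul]
  rfl

theorem conjSub_le {x : G} (hHK : H ≤ K) (hx : x ∈ K) : conjSub H x ≤ K :=
  Subgroup.conj_smul_le_of_le hHK ⟨x⁻¹, K.inv_mem hx⟩

theorem le_of_coe_mul_conjSub_eq {y : G} (hHT : H ≤ T) (hy : y ∈ K)
    (h : (T : Set G) * conjSub H y = K) : K ≤ T := by
  have factor : ∀ k ∈ K, ∃ t ∈ T, ∃ u ∈ H, k = t * y⁻¹ * u := by
    intro k hk
    obtain ⟨t, ht, u, hu, htu⟩ : k * y ∈ (T : Set G) * conjSub H y := h ▸ K.mul_mem hk hy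
    refine ⟨t, ht, _, mem_conjSub.mp hu, ?_⟩
    rw [← mul_inv_eq_iff_eq_mul.mpr htu.symm]
    group
  obtain ⟨t, ht, u, hu, h1⟩ := factor 1 K.one_mem
  have hy' : y⁻¹ ∈ T := by
    have hy_inv : y⁻¹ = t⁻¹ * u⁻¹ := calc
      y⁻¹ = t⁻¹ * (t * y⁻¹ * u) * u⁻¹ := by group
      _ = t⁻¹ * u⁻¹ := by rw [← h1, mul_one]
    rw [hy_inv]
    exact T.mul_mem (T.inv_mem ht) (T.inv_mem (hHT hu))
  intro k hk
  obtain ⟨t', ht', u', hu', rfl⟩ := factor k hk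
  exact T.mul_mem (T.mul_mem ht' hy') (hHT hu')

theorem permutable_conjSub_conjSub (hcomm : ∀ x ∈ K, H.Permutable (conjSub H x)) {y z : G}
    (hy : y ∈ K) (hz : z ∈ K) : (conjSub H y).Permutable (conjSub H z) := by
  have h := (hcomm _ (K.mul_mem hz (K.inv_mem hy))).conjSub y
  rwa [conjSub_conjSub, inv_mul_cancel_right] at h

theorem conjSub_le_of_maximal (hperm : ∀ y ∈ K, ∀ z ∈ K, (conjSub H y).Permutable (conjSub H z))
    (hT : Maximal (fun T : Subgroup G => H ≤ T ∧ T < K ∧ ∀ y ∈ K, T.Permutable (conjSub H y)) T)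
    {y : G} (hy : y ∈ K) : conjSub H y ≤ T := by
  obtain ⟨hHT, hTK, hTperm⟩ := hT.prop
  have hsupK : T ⊔ conjSub H y < K := by
    refine lt_of_le_of_ne (sup_le hTK.le (conjSub_le (hHT.trans hTK.le) hy)) fun hK => ?_
    refine hTK.not_ge (le_of_coe_mul_conjSub_eq hHT hy ?_)
    rw [← (hTperm y hy).coe_sup, hK]
  have hsup : T ⊔ conjSub H y ≤ T :=
    hT.le_of_ge ⟨hHT.trans le_sup_left, hsupK,
      fun z hz => (hTperm y hy).sup_left (hTperm z hz) (hperm y hy z hz)⟩ le_sup_left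
  exact le_sup_right.trans hsup

end conjSub

theorem stmt1 {G : Type*} [Group G] [Fintype G] (H K : Subgroup G)
    (hcomm : ∀ x ∈ K, (H : Set G) * (conjSub H x : Set G) = (conjSub H x : Set G) * (H : Set G))
    (hlt : H < K) :
    (⨆ x ∈ K, conjSub H x) < K := by
  obtain ⟨T, -, hT⟩ := Finite.exists_le_maximal (a := H)
    (p := fun T : Subgroup G => H ≤ T ∧ T < K ∧ ∀ y ∈ K, T.Permutable (conjSub H y))
    ⟨le_rfl, hlt, hcomm⟩
  have hperm : ∀ y ∈ K, ∀ z ∈ K, (conjSub H y).Permutable (conjSub H z) :=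
    fun y hy z hz => permutable_conjSub_conjSub hcomm hy hz
  have hle : (⨆ x ∈ K, conjSub H x) ≤ T := iSup₂_le fun y hy => conjSub_le_of_maximal hperm hT hy
  exact hle.trans_lt hT.prop.2.1
end

section
/- Let G be a finite group with G ∈ CD(G). Then every atom of CD(G) and every coatom of CD(G) is a normal subgroup of G. Here an atom of CD(G) is an element A ∈ CD(G) with T ≺ A, where T is the least element of CD(G), and a coatom is an element B ∈ CD(G) with B ≺ G. -/
open Pointwise

/-- The Chermak-Delgado measure of a subgroup: `m_G(H) = |H| * |C_G(H)|`. -/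
noncomputable def cdMeasure {G : Type*} [Group G] (H : Subgroup G) : Nat :=
  Nat.card H * Nat.card (Subgroup.centralizer (H : Set G))

/-- The Chermak-Delgado lattice of `G`: the subgroups of maximal Chermak-Delgado measure. -/
def CD (G : Type*) [Group G] : Set (Subgroup G) :=
  {H | ∀ K : Subgroup G, cdMeasure K ≤ cdMeasure H}

/-!
Members of `CD G` are closed under joins, and for `H, K ∈ CD G` the inequalities
`|H| |K| ≤ |H ⊔ K| |H ⊓ K|` and `|C(H)| |C(K)| ≤ |C(H ⊓ K)| |C(H ⊔ K)|` behind this closure are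
equalities, so `H * K = H ⊔ K` as sets. Conjugation preserves `CD G`. If `B` is a coatom and
`B^g ≠ B`, then `B ⊔ B^g = G`, hence `B * B^g = G`; writing `g⁻¹ = b · g b' g⁻¹` gives `g ∈ B`,
a contradiction. For atoms: `H ↦ C(H)` is an order-reversing involution of `CD G`, and the
least member of `CD G` is `Z(G) = C(G)`; so `C` exchanges atoms and coatoms, and `A = C(C(A))`
is normal because `C(A)` is.
-/

namespace Subgroup

variable {G : Type*} [Group G]

theorem card_mul_mul_card_inf (H K : Subgroup G) :
    Nat.card ((H : Set G) * (K : Set G)) * Nat.card ↥(H ⊓ K) = Nat.card H * Nat.card K := by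
  have hsmul (h : H) : h • ((1 : G) : G ⧸ K) = ((h : G) : G ⧸ K) := by
    change ((h * 1 : G) : G ⧸ K) = _
    rw [mul_one]
  have horbit : MulAction.orbit H ((1 : G) : G ⧸ K) = QuotientGroup.mk '' (H : Set G) := by
    ext
    simp [MulAction.mem_orbit_iff, hsmul]
  have hstab : MulAction.stabilizer H ((1 : G) : G ⧸ K) = K.subgroupOf H := by
    ext
    simp [hsmul, QuotientGroup.eq, mem_subgroupOf]
  have hcard : Nat.card (K.subgroupOf H) = Nat.card ↥(H ⊓ K) := by
    rw [← inf_subgroupOf_left]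
    exact Nat.card_congr (subgroupOfEquivOfLe inf_le_left).toEquiv
  rw [card_mul_eq_card_subgroup_mul_card_quotient, mul_assoc, mul_comm (Nat.card K), ← hcard,
    ← hstab, ← horbit, ← Nat.card_prod,
    Nat.card_congr (MulAction.orbitProdStabilizerEquivGroup H _)]

theorem coe_mul_coe_subset_sup (H K : Subgroup G) : (H : Set G) * (K : Set G) ⊆ ↑(H ⊔ K) :=
  mul_subset (SetLike.coe_subset_coe.mpr le_sup_left) (SetLike.coe_subset_coe.mpr le_sup_right)

theorem centralizer_sup (H K : Subgroup G) :
    centralizer ((H ⊔ K : Subgroup G) : Set G) =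
      centralizer (H : Set G) ⊓ centralizer (K : Set G) := by
  calc centralizer ((H ⊔ K : Subgroup G) : Set G)
        = centralizer ((closure ((H : Set G) ∪ K) : Subgroup G) : Set G) := by
          rw [closure_union, closure_eq, closure_eq]
    _ = centralizer (H : Set G) ⊓ centralizer (K : Set G) := by
          rw [centralizer_closure]
          exact SetLike.coe_injective Set.centralizer_union

theorem mem_of_coe_mul_conj_smul_eq_univ {D : Subgroup G} {g : G}
    (h : (D : Set G) * ((MulAut.conj g • D : Subgroup G) : Set G) = Set.univ) : g ∈ D := by
  obtain ⟨d, hd, x, hx, hdx⟩ := Set.mem_mul.mp (h.symm ▸ Set.mem_univ g⁻¹)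
  rw [SetLike.mem_coe, mem_pointwise_smul_iff_inv_smul_mem, ← map_inv, MulAut.smul_def,
    MulAut.conj_apply, inv_inv, eq_inv_mul_of_mul_eq hdx] at hx
  have hconj : g⁻¹ * (d⁻¹ * g⁻¹) * g = g⁻¹ * d⁻¹ := by group
  rwa [hconj, mul_mem_cancel_right (inv_mem hd), inv_mem_iff] at hx

variable [Finite G]

theorem card_mul_le_card_sup_mul_card_inf (H K : Subgroup G) :
    Nat.card H * Nat.card K ≤ Nat.card ↥(H ⊔ K) * Nat.card ↥(H ⊓ K) := by
  rw [← card_mul_mul_card_inf]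
  gcongr
  exact Nat.card_mono (Set.toFinite _) (coe_mul_coe_subset_sup H K)

theorem coe_mul_coe_eq_sup_of_card_le {H K : Subgroup G}
    (h : Nat.card ↥(H ⊔ K) * Nat.card ↥(H ⊓ K) ≤ Nat.card H * Nat.card K) :
    (H : Set G) * (K : Set G) = ↑(H ⊔ K) := by
  rw [← card_mul_mul_card_inf H K] at h
  refine Set.eq_of_subset_of_ncard_le (coe_mul_coe_subset_sup H K) ?_ (Set.toFinite _)
  rw [← Nat.card_coe_set_eq, ← Nat.card_coe_set_eq]
  exact Nat.le_of_mul_le_mul_right h Nat.card_pos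

theorem card_centralizer_mul_le (H K : Subgroup G) :
    Nat.card (centralizer (H : Set G)) * Nat.card (centralizer (K : Set G)) ≤
      Nat.card (centralizer ((H ⊓ K : Subgroup G) : Set G)) *
        Nat.card (centralizer ((H ⊔ K : Subgroup G) : Set G)) := by
  refine (card_mul_le_card_sup_mul_card_inf _ _).trans ?_
  rw [centralizer_sup]
  gcongr
  exact card_le_of_le (sup_le (centralizer_le inf_le_left) (centralizer_le inf_le_right))

end Subgroup

namespace CD

open Subgroup

variable {G : Type*} [Group G]

theorem mem_of_le_cdMeasure {H K : Subgroup G} (hH : H ∈ CD G)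
    (h : cdMeasure H ≤ cdMeasure K) : K ∈ CD G :=
  fun L => (hH L).trans h

variable [Finite G]

theorem cdMeasure_pos (H : Subgroup G) : 0 < cdMeasure H :=
  Nat.mul_pos Nat.card_pos Nat.card_pos

theorem centralizer_mem {H : Subgroup G} (hH : H ∈ CD G) : centralizer (H : Set G) ∈ CD G := by
  refine mem_of_le_cdMeasure hH ?_
  rw [cdMeasure, cdMeasure, mul_comm]
  exact Nat.mul_le_mul_left _ (card_le_of_le (le_centralizer_iff.mpr le_rfl))

theorem centralizer_centralizer {H : Subgroup G} (hH : H ∈ CD G) :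
    centralizer (centralizer (H : Set G) : Set G) = H := by
  refine (eq_of_le_of_card_ge (le_centralizer_iff.mpr le_rfl) ?_).symm
  have h := hH (centralizer (H : Set G))
  rw [cdMeasure, cdMeasure, mul_comm (Nat.card H)] at h
  exact Nat.le_of_mul_le_mul_left h Nat.card_pos

theorem centralizer_lt_centralizer {H K : Subgroup G} (hH : H ∈ CD G) (hK : K ∈ CD G)
    (h : H < K) : centralizer (K : Set G) < centralizer (H : Set G) := by
  refine lt_of_le_of_ne (centralizer_le h.le) fun heq => h.ne ?_
  rw [← centralizer_centralizer hH, ← heq, centralizer_centralizer hK]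

theorem smul_mem (σ : MulAut G) {H : Subgroup G} (hH : H ∈ CD G) : σ • H ∈ CD G := by
  refine mem_of_le_cdMeasure hH ?_
  have hC : σ • centralizer (H : Set G) ≤ centralizer ↑(σ • H) :=
    map_centralizer_le_centralizer_image _ _
  rw [cdMeasure, cdMeasure, Nat.card_congr (equivSMul σ H).toEquiv,
    Nat.card_congr (equivSMul σ (centralizer (H : Set G))).toEquiv]
  exact Nat.mul_le_mul_left _ (card_le_of_le hC)

theorem sup_mem {H K : Subgroup G} (hH : H ∈ CD G) (hK : K ∈ CD G) :
    H ⊔ K ∈ CD G ∧ (H : Set G) * (K : Set G) = ↑(H ⊔ K) := by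
  have hcard := card_mul_le_card_sup_mul_card_inf H K
  have hcent := card_centralizer_mul_le H K
  have hHK : cdMeasure H * cdMeasure K = (Nat.card H * Nat.card K) *
      (Nat.card (centralizer (H : Set G)) * Nat.card (centralizer (K : Set G))) := by
    unfold cdMeasure; ring
  have hsupinf : cdMeasure (H ⊔ K) * cdMeasure (H ⊓ K) =
      (Nat.card ↥(H ⊔ K) * Nat.card ↥(H ⊓ K)) *
        (Nat.card (centralizer ((H ⊓ K : Subgroup G) : Set G)) *
          Nat.card (centralizer ((H ⊔ K : Subgroup G) : Set G))) := by
    unfold cdMeasure; ring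
  have heq : cdMeasure (H ⊔ K) * cdMeasure (H ⊓ K) = cdMeasure H * cdMeasure K :=
    le_antisymm (Nat.mul_le_mul (hH _) (hK _))
      (by rw [hHK, hsupinf]; exact Nat.mul_le_mul hcard hcent)
  refine ⟨mem_of_le_cdMeasure hH ?_, coe_mul_coe_eq_sup_of_card_le ?_⟩
  · exact ((mul_eq_mul_iff_eq_and_eq_of_pos (hH _) (hK _) (cdMeasure_pos _)
      (cdMeasure_pos _)).mp heq).1.ge
  · rw [hHK, hsupinf] at heq
    exact ((mul_eq_mul_iff_eq_and_eq_of_pos hcard hcent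
      (Nat.mul_pos Nat.card_pos Nat.card_pos) (Nat.mul_pos Nat.card_pos Nat.card_pos)).mp
        heq.symm).1.ge

theorem normal_of_coatom {B : Subgroup G} (hB : B ∈ CD G)
    (hcov : ¬ ∃ R ∈ CD G, B < R ∧ R < ⊤) : B.Normal := by
  refine Normal.of_conjugate_fixed fun g => ?_
  obtain ⟨hsup, hmul⟩ := sup_mem hB (smul_mem (MulAut.conj g) hB)
  rcases eq_or_ne (B ⊔ MulAut.conj g • B) ⊤ with htop | hne
  · rw [htop, coe_top] at hmul
    exact conj_smul_eq_self_of_mem (mem_of_coe_mul_conj_smul_eq_univ hmul)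
  · have hle : MulAut.conj g • B ≤ B := by
      by_contra hnle
      exact hcov ⟨_, hsup, left_lt_sup.mpr hnle, lt_top_iff_ne_top.mpr hne⟩
    exact eq_of_le_of_card_ge hle (Nat.card_congr (equivSMul (MulAut.conj g) B).toEquiv).le

theorem normal_of_atom (hG : ⊤ ∈ CD G) {T A : Subgroup G} (hTleast : ∀ X ∈ CD G, T ≤ X)
    (hA : A ∈ CD G) (hcov : ¬ ∃ R ∈ CD G, T < R ∧ R < A) : A.Normal := by
  have hCT : centralizer (T : Set G) = ⊤ := by
    refine top_le_iff.mp ?_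
    rw [← centralizer_centralizer hG]
    exact centralizer_le (hTleast _ (centralizer_mem hG))
  have : (centralizer (A : Set G)).Normal := by
    refine normal_of_coatom (centralizer_mem hA) fun ⟨R, hR, hAR, hRtop⟩ => hcov ?_
    refine ⟨centralizer R, centralizer_mem hR, ?_, ?_⟩
    · refine lt_of_le_of_ne (hTleast _ (centralizer_mem hR)) fun hTR => hRtop.ne ?_
      rw [← centralizer_centralizer hR, ← hTR, hCT]
    · simpa only [centralizer_centralizer hA] using
        centralizer_lt_centralizer (centralizer_mem hA) hR hAR
  rw [← centralizer_centralizer hA]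
  infer_instance

end CD

theorem stmt5_general {G : Type*} [Group G] [Fintype G] (hG : (⊤ : Subgroup G) ∈ CD G)
    (T : Subgroup G) (hTleast : ∀ X ∈ CD G, T ≤ X) :
    (∀ A ∈ CD G, (T < A ∧ ¬ ∃ R ∈ CD G, T < R ∧ R < A) → A.Normal) ∧
    (∀ B ∈ CD G, (B < ⊤ ∧ ¬ ∃ R ∈ CD G, B < R ∧ R < ⊤) → B.Normal) :=
  ⟨fun _ hA ⟨_, hcov⟩ => CD.normal_of_atom hG hTleast hA hcov,
    fun _ hB ⟨_, hcov⟩ => CD.normal_of_coatom hB hcov⟩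

theorem stmt5 {G : Type*} [Group G] [Fintype G] (hG : (⊤ : Subgroup G) ∈ CD G)
    (T : Subgroup G) (hT : T ∈ CD G) (hTleast : ∀ X ∈ CD G, T ≤ X) :
    (∀ A ∈ CD G, (T < A ∧ ¬ ∃ R ∈ CD G, T < R ∧ R < A) → A.Normal) ∧
    (∀ B ∈ CD G, (B < ⊤ ∧ ¬ ∃ R ∈ CD G, B < R ∧ R < ⊤) → B.Normal) :=
  stmt5_general hG T hTleast
end

section
/- Let G₁ and G₂ be finite groups. The trivial subgroup lies in CD(G₁ × G₂) if and only if the trivial subgroup lies in CD(G₁) and the trivial subgroup lies in CD(G₂). -/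
open Pointwise

/-! The measure is multiplicative on product subgroups `H₁ × H₂`, and the trivial subgroup has
measure `|G|`. An arbitrary `K ≤ G₁ × G₂` has the same centralizer as the product `K₁ × K₂` of its
projections and is no larger, so `m(K) ≤ m(K₁) m(K₂)`: the maximal measure of `G₁ × G₂` is the
product of those of the factors, and `1` attains it exactly when it does in both factors. -/

namespace Subgroup

variable {G₁ G₂ : Type*} [Group G₁] [Group G₂]

theorem card_prod (H₁ : Subgroup G₁) (H₂ : Subgroup G₂) :
    Nat.card (H₁.prod H₂) = Nat.card H₁ * Nat.card H₂ := by
  rw [Nat.card_congr (prodEquiv H₁ H₂).toEquiv, Nat.card_prod]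

theorem centralizer_prod (H₁ : Subgroup G₁) (H₂ : Subgroup G₂) :
    centralizer (H₁.prod H₂ : Set (G₁ × G₂)) = (centralizer H₁).prod (centralizer H₂) :=
  SetLike.coe_injective <| Set.centralizer_prod ⟨1, H₁.one_mem⟩ ⟨1, H₂.one_mem⟩

theorem centralizer_eq_centralizer_prod_map (K : Subgroup (G₁ × G₂)) :
    centralizer (K : Set (G₁ × G₂)) =
      centralizer ((K.map (MonoidHom.fst G₁ G₂)).prod (K.map (MonoidHom.snd G₁ G₂)) :
        Set (G₁ × G₂)) := by
  refine le_antisymm (fun g hg => ?_) (centralizer_le (le_prod_iff.2 ⟨le_rfl, le_rfl⟩))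
  rw [mem_centralizer_iff] at hg ⊢
  rintro ⟨a, b⟩ ⟨⟨x, hx, rfl⟩, ⟨y, hy, rfl⟩⟩
  have hx₁ := congrArg Prod.fst (hg x hx)
  have hy₂ := congrArg Prod.snd (hg y hy)
  exact Prod.ext hx₁ hy₂

end Subgroup

section ChermakDelgado

variable {G G₁ G₂ : Type*} [Group G] [Group G₁] [Group G₂]

theorem cdMeasure_bot : cdMeasure (⊥ : Subgroup G) = Nat.card G := by
  rw [cdMeasure, Subgroup.centralizer_eq_top_iff_subset.2 (bot_le (a := Subgroup.center G))]
  simp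

theorem bot_mem_CD_iff :
    (⊥ : Subgroup G) ∈ CD G ↔ ∀ K : Subgroup G, cdMeasure K ≤ Nat.card G := by
  simp only [CD, Set.mem_ofPred_eq, cdMeasure_bot]

theorem cdMeasure_prod (H₁ : Subgroup G₁) (H₂ : Subgroup G₂) :
    cdMeasure (H₁.prod H₂) = cdMeasure H₁ * cdMeasure H₂ := by
  simp only [cdMeasure, Subgroup.centralizer_prod, Subgroup.card_prod]
  ring

theorem cdMeasure_le_mul_cdMeasure_map [Finite G₁] [Finite G₂] (K : Subgroup (G₁ × G₂)) :
    cdMeasure K ≤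
      cdMeasure (K.map (MonoidHom.fst G₁ G₂)) * cdMeasure (K.map (MonoidHom.snd G₁ G₂)) := by
  rw [← cdMeasure_prod, cdMeasure, cdMeasure, ← Subgroup.centralizer_eq_centralizer_prod_map]
  gcongr
  exact Subgroup.card_le_of_le (Subgroup.le_prod_iff.2 ⟨le_rfl, le_rfl⟩)

end ChermakDelgado

theorem stmt7 {G₁ G₂ : Type*} [Group G₁] [Group G₂] [Fintype G₁] [Fintype G₂] :
    (⊥ : Subgroup (G₁ × G₂)) ∈ CD (G₁ × G₂) ↔
      (⊥ : Subgroup G₁) ∈ CD G₁ ∧ (⊥ : Subgroup G₂) ∈ CD G₂ := by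
  simp only [bot_mem_CD_iff, Nat.card_prod]
  constructor
  · intro h
    refine ⟨fun K₁ => ?_, fun K₂ => ?_⟩
    · have := h (K₁.prod ⊥)
      rw [cdMeasure_prod, cdMeasure_bot] at this
      exact Nat.le_of_mul_le_mul_right this Nat.card_pos
    · have := h (Subgroup.prod ⊥ K₂)
      rw [cdMeasure_prod, cdMeasure_bot] at this
      exact Nat.le_of_mul_le_mul_left this Nat.card_pos
  · rintro ⟨h₁, h₂⟩ K
    exact (cdMeasure_le_mul_cdMeasure_map K).trans (Nat.mul_le_mul (h₁ _) (h₂ _))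
end

section
/- Let G be a finite group that is CD-minimal (1 ∈ CD(G) and G is indecomposable) but not CD-simple (CD(G) ≠ {1, G}). If A is an atom of CD(G), then A is abelian, A is normal in G, and |A| is divisible by at least two distinct primes. -/
open Pointwise

namespace CDAux

open Subgroup

variable {G : Type*} [Group G]

theorem centralizer_coe_sup (H K : Subgroup G) :
    Subgroup.centralizer ((H ⊔ K : Subgroup G) : Set G) =
      Subgroup.centralizer (H : Set G) ⊓ Subgroup.centralizer (K : Set G) := by
  apply le_antisymm
  · exact le_inf (Subgroup.centralizer_le (SetLike.coe_subset_coe.mpr le_sup_left))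
      (Subgroup.centralizer_le (SetLike.coe_subset_coe.mpr le_sup_right))
  · rw [← Subgroup.le_centralizer_iff]
    apply sup_le
    · rw [Subgroup.le_centralizer_iff]; exact inf_le_left
    · rw [Subgroup.le_centralizer_iff]; exact inf_le_right

theorem subgroup_le_centralizer_centralizer (H : Subgroup G) :
    H ≤ Subgroup.centralizer ((Subgroup.centralizer (H : Set G) : Subgroup G) : Set G) :=
  Subgroup.le_centralizer_iff.mpr le_rfl

/-- The product formula : `|HK| * |H ⊓ K| = |H| * |K|`. -/
theorem card_mul_inf (H K : Subgroup G) :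
    Nat.card ((H : Set G) * (K : Set G) : Set G) * Nat.card (H ⊓ K : Subgroup G) =
      Nat.card H * Nat.card K := by
  rw [Subgroup.card_mul_eq_card_subgroup_mul_card_quotient K (H : Set G)]
  have himg : Nat.card (((H : Set G)).image ((↑) : G → G ⧸ K) : Set (G ⧸ K)) *
      Nat.card (K.subgroupOf H) = Nat.card H := by
    have hresp : ∀ a b : H, QuotientGroup.leftRel (K.subgroupOf H) a b →
        (⟨QuotientGroup.mk (a : G), ⟨(a : G), a.2, rfl⟩⟩ :
            (((H : Set G)).image ((↑) : G → G ⧸ K) : Set (G ⧸ K))) =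
          ⟨QuotientGroup.mk (b : G), ⟨(b : G), b.2, rfl⟩⟩ := by
      intro a b hab
      rw [QuotientGroup.leftRel_apply] at hab
      have hmem : ((a : G))⁻¹ * (b : G) ∈ K := hab
      exact Subtype.ext (QuotientGroup.eq.mpr hmem)
    let fbar : (H ⧸ K.subgroupOf H) → (((H : Set G)).image ((↑) : G → G ⧸ K) : Set (G ⧸ K)) :=
      Quotient.lift _ hresp
    have hsurj : Function.Surjective fbar := by
      rintro ⟨q, g, hg, rfl⟩
      exact ⟨QuotientGroup.mk (⟨g, hg⟩ : H), rfl⟩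
    have hinj : Function.Injective fbar := by
      intro x y
      refine QuotientGroup.induction_on x fun a => QuotientGroup.induction_on y fun b hab => ?_
      have h1 : (QuotientGroup.mk (a : G) : G ⧸ K) = QuotientGroup.mk (b : G) :=
        congrArg Subtype.val hab
      rw [QuotientGroup.eq] at h1
      refine QuotientGroup.eq.mpr ?_
      rw [Subgroup.mem_subgroupOf]
      simpa using h1
    have hq := Subgroup.card_eq_card_quotient_mul_card_subgroup (K.subgroupOf H)
    rw [← Nat.card_congr (Equiv.ofBijective fbar ⟨hinj, hsurj⟩)]
    exact hq.symm
  have hsub : Nat.card (K.subgroupOf H) = Nat.card (H ⊓ K : Subgroup G) := by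
    rw [← Subgroup.inf_subgroupOf_left]
    exact Nat.card_congr (Subgroup.subgroupOfEquivOfLe inf_le_left).toEquiv
  rw [hsub] at himg
  rw [mul_assoc, himg, mul_comm]

theorem mul_subset_sup (H K : Subgroup G) :
    ((H : Set G) * (K : Set G) : Set G) ⊆ ((H ⊔ K : Subgroup G) : Set G) := by
  rintro x ⟨a, ha, b, hb, rfl⟩
  exact mul_mem ((le_sup_left : H ≤ H ⊔ K) ha) ((le_sup_right : K ≤ H ⊔ K) hb)

theorem centralizer_mul_subset (H K : Subgroup G) :
    ((Subgroup.centralizer (H : Set G) : Subgroup G) : Set G) *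
        ((Subgroup.centralizer (K : Set G) : Subgroup G) : Set G) ⊆
      ((Subgroup.centralizer ((H ⊓ K : Subgroup G) : Set G) : Subgroup G) : Set G) := by
  rintro x ⟨c, hc, d, hd, rfl⟩
  rw [SetLike.mem_coe, Subgroup.mem_centralizer_iff]
  intro h hh
  have hc' : h * c = c * h :=
    (SetLike.mem_coe.mp hc) h (SetLike.mem_coe.mpr ((inf_le_left : H ⊓ K ≤ H) hh))
  have hd' : h * d = d * h :=
    (SetLike.mem_coe.mp hd) h (SetLike.mem_coe.mpr ((inf_le_right : H ⊓ K ≤ K) hh))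
  calc h * (c * d) = h * c * d := by rw [mul_assoc]
    _ = c * h * d := by rw [hc']
    _ = c * (h * d) := by rw [mul_assoc]
    _ = c * (d * h) := by rw [hd']
    _ = c * d * h := by rw [mul_assoc]

variable [Fintype G]

theorem cdMeasure_bot : cdMeasure (⊥ : Subgroup G) = Nat.card G := by
  have hcent : Subgroup.centralizer (((⊥ : Subgroup G) : Set G)) = ⊤ := by
    rw [eq_top_iff']
    intro x
    rw [Subgroup.mem_centralizer_iff]
    intro h hh
    have : h = 1 := by simpa [Subgroup.mem_bot] using hh
    simp [this]
  rw [cdMeasure, hcent, Subgroup.card_bot, Subgroup.card_top, one_mul]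

theorem cdMeasure_le (hbot : (⊥ : Subgroup G) ∈ CD G) (K : Subgroup G) :
    cdMeasure K ≤ Nat.card G :=
  (hbot K).trans_eq cdMeasure_bot

theorem mem_CD_iff (hbot : (⊥ : Subgroup G) ∈ CD G) {H : Subgroup G} :
    H ∈ CD G ↔ cdMeasure H = Nat.card G := by
  constructor
  · intro hH
    refine le_antisymm (cdMeasure_le hbot H) ?_
    have h := hH ⊥
    rwa [cdMeasure_bot] at h
  · intro h K
    exact (cdMeasure_le hbot K).trans_eq h.symm

theorem key_ineq (H K : Subgroup G) :
    cdMeasure H * cdMeasure K ≤ cdMeasure (H ⊔ K) * cdMeasure (H ⊓ K) := by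
  have h1 : Nat.card H * Nat.card K =
      Nat.card ((H : Set G) * (K : Set G) : Set G) * Nat.card (H ⊓ K : Subgroup G) :=
    (card_mul_inf H K).symm
  have h2 : Nat.card (Subgroup.centralizer (H : Set G)) *
        Nat.card (Subgroup.centralizer (K : Set G)) =
      Nat.card (((Subgroup.centralizer (H : Set G) : Subgroup G) : Set G) *
          ((Subgroup.centralizer (K : Set G) : Subgroup G) : Set G) : Set G) *
        Nat.card (Subgroup.centralizer (((H ⊔ K : Subgroup G) : Set G))) := by
    rw [centralizer_coe_sup]
    exact (card_mul_inf _ _).symm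
  have h3 : Nat.card ((H : Set G) * (K : Set G) : Set G) ≤
      Nat.card (H ⊔ K : Subgroup G) :=
    Nat.card_mono (Set.toFinite _) (mul_subset_sup H K)
  have h4 : Nat.card (((Subgroup.centralizer (H : Set G) : Subgroup G) : Set G) *
        ((Subgroup.centralizer (K : Set G) : Subgroup G) : Set G) : Set G) ≤
      Nat.card (Subgroup.centralizer (((H ⊓ K : Subgroup G) : Set G))) :=
    Nat.card_mono (Set.toFinite _) (centralizer_mul_subset H K)
  calc cdMeasure H * cdMeasure K
      = (Nat.card H * Nat.card K) *
        (Nat.card (Subgroup.centralizer (H : Set G)) *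
          Nat.card (Subgroup.centralizer (K : Set G))) := by
        rw [cdMeasure, cdMeasure]; ring
    _ = (Nat.card ((H : Set G) * (K : Set G) : Set G) *
          Nat.card (((Subgroup.centralizer (H : Set G) : Subgroup G) : Set G) *
            ((Subgroup.centralizer (K : Set G) : Subgroup G) : Set G) : Set G)) *
        (Nat.card (H ⊓ K : Subgroup G) *
          Nat.card (Subgroup.centralizer (((H ⊔ K : Subgroup G) : Set G)))) := by
        rw [h1, h2]; ring
    _ ≤ (Nat.card (H ⊔ K : Subgroup G) *
          Nat.card (Subgroup.centralizer (((H ⊓ K : Subgroup G) : Set G)))) *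
        (Nat.card (H ⊓ K : Subgroup G) *
          Nat.card (Subgroup.centralizer (((H ⊔ K : Subgroup G) : Set G)))) :=
        Nat.mul_le_mul (Nat.mul_le_mul h3 h4) le_rfl
    _ = cdMeasure (H ⊔ K) * cdMeasure (H ⊓ K) := by
        rw [cdMeasure, cdMeasure]; ring

theorem inf_mem_CD (hbot : (⊥ : Subgroup G) ∈ CD G) {H K : Subgroup G}
    (hH : H ∈ CD G) (hK : K ∈ CD G) : H ⊓ K ∈ CD G := by
  rw [mem_CD_iff hbot] at hH hK ⊢
  have h1 := key_ineq H K
  rw [hH, hK] at h1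
  have h2 : cdMeasure (H ⊔ K) * cdMeasure (H ⊓ K) ≤ Nat.card G * cdMeasure (H ⊓ K) :=
    Nat.mul_le_mul (cdMeasure_le hbot _) le_rfl
  have hpos : 0 < Nat.card G := Nat.card_pos
  have h4 : Nat.card G ≤ cdMeasure (H ⊓ K) :=
    Nat.le_of_mul_le_mul_left (by
      calc Nat.card G * Nat.card G ≤ Nat.card G * cdMeasure (H ⊓ K) := h1.trans h2
      ) hpos
  exact le_antisymm (cdMeasure_le hbot _) h4

theorem centralizer_mem_CD (hbot : (⊥ : Subgroup G) ∈ CD G) {H : Subgroup G}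
    (hH : H ∈ CD G) : Subgroup.centralizer (H : Set G) ∈ CD G := by
  rw [mem_CD_iff hbot] at hH ⊢
  have h1 : cdMeasure H ≤ cdMeasure (Subgroup.centralizer (H : Set G)) := by
    rw [cdMeasure, cdMeasure, mul_comm]
    exact Nat.mul_le_mul le_rfl
      (Subgroup.card_le_of_le (subgroup_le_centralizer_centralizer H))
  exact le_antisymm (cdMeasure_le hbot _) (hH ▸ h1)

theorem centralizer_prod_eq_univ (hbot : (⊥ : Subgroup G) ∈ CD G) {H K : Subgroup G}
    (hH : H ∈ CD G) (hK : K ∈ CD G) (hdisj : H ⊓ K = ⊥) :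
    ((Subgroup.centralizer (H : Set G) : Subgroup G) : Set G) *
      ((Subgroup.centralizer (K : Set G) : Subgroup G) : Set G) = Set.univ := by
  set X := Nat.card (((Subgroup.centralizer (H : Set G) : Subgroup G) : Set G) *
    ((Subgroup.centralizer (K : Set G) : Subgroup G) : Set G) : Set G) with hX
  have h1 : X * Nat.card (Subgroup.centralizer (((H ⊔ K : Subgroup G) : Set G))) =
      Nat.card (Subgroup.centralizer (H : Set G)) *
        Nat.card (Subgroup.centralizer (K : Set G)) := by
    have := card_mul_inf (Subgroup.centralizer (H : Set G)) (Subgroup.centralizer (K : Set G))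
    rw [← centralizer_coe_sup] at this
    exact this
  have hHK : Nat.card H * Nat.card K ≤ Nat.card (H ⊔ K : Subgroup G) := by
    have h := card_mul_inf H K
    rw [hdisj, Subgroup.card_bot, mul_one] at h
    rw [← h]
    exact Nat.card_mono (Set.toFinite _) (mul_subset_sup H K)
  have hJ : cdMeasure (H ⊔ K) ≤ Nat.card G := cdMeasure_le hbot _
  have hmH : cdMeasure H = Nat.card G := (mem_CD_iff hbot).mp hH
  have hmK : cdMeasure K = Nat.card G := (mem_CD_iff hbot).mp hK
  have hbig : Nat.card G * Nat.card G ≤ X * Nat.card G := by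
    calc Nat.card G * Nat.card G = cdMeasure H * cdMeasure K := by rw [hmH, hmK]
      _ = (Nat.card H * Nat.card K) *
          (Nat.card (Subgroup.centralizer (H : Set G)) *
            Nat.card (Subgroup.centralizer (K : Set G))) := by
          rw [cdMeasure, cdMeasure]; ring
      _ = (Nat.card H * Nat.card K) *
          (X * Nat.card (Subgroup.centralizer (((H ⊔ K : Subgroup G) : Set G)))) := by rw [h1]
      _ ≤ (Nat.card (H ⊔ K : Subgroup G)) *
          (X * Nat.card (Subgroup.centralizer (((H ⊔ K : Subgroup G) : Set G)))) :=
          Nat.mul_le_mul hHK le_rfl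
      _ = X * cdMeasure (H ⊔ K) := by rw [cdMeasure]; ring
      _ ≤ X * Nat.card G := Nat.mul_le_mul le_rfl hJ
  have hXG : Nat.card G ≤ X := Nat.le_of_mul_le_mul_right hbig Nat.card_pos
  apply Set.eq_of_subset_of_ncard_le (Set.subset_univ _)
  rw [Set.ncard_univ, ← Nat.card_coe_set_eq]
  exact hXG

theorem centralizer_map (e : G ≃* G) (H : Subgroup G) :
    Subgroup.centralizer ((H.map e.toMonoidHom : Subgroup G) : Set G) =
      (Subgroup.centralizer (H : Set G)).map e.toMonoidHom := by
  ext x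
  rw [Subgroup.mem_map_equiv, Subgroup.mem_centralizer_iff, Subgroup.mem_centralizer_iff]
  constructor
  · intro h y hy
    have hmem : e y ∈ (H.map e.toMonoidHom : Subgroup G) :=
      Subgroup.mem_map.mpr ⟨y, hy, rfl⟩
    have h2 := h (e y) (SetLike.mem_coe.mpr hmem)
    have h3 := congrArg e.symm h2
    simpa [map_mul] using h3
  · intro h y hy
    obtain ⟨z, hz, rfl⟩ := Subgroup.mem_map.mp (SetLike.mem_coe.mp hy)
    have h2 := h z (SetLike.mem_coe.mpr hz)
    have h3 := congrArg e h2
    simpa [map_mul] using h3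

theorem card_map_equiv (e : G ≃* G) (H : Subgroup G) :
    Nat.card (H.map e.toMonoidHom : Subgroup G) = Nat.card H :=
  (Nat.card_congr (H.equivMapOfInjective e.toMonoidHom e.injective).toEquiv).symm

theorem cdMeasure_map (e : G ≃* G) (H : Subgroup G) :
    cdMeasure (H.map e.toMonoidHom) = cdMeasure H := by
  rw [cdMeasure, cdMeasure, centralizer_map, card_map_equiv, card_map_equiv]

end CDAux

theorem stmt13 {G : Type*} [Group G] [Fintype G]
    (hbot : (⊥ : Subgroup G) ∈ CD G)
    (hindec : ¬ ∃ H K : Subgroup G, H ≠ ⊥ ∧ K ≠ ⊥ ∧ H.Normal ∧ K.Normal ∧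
        H ⊓ K = ⊥ ∧ H ⊔ K = ⊤)
    (hnotsimple : CD G ≠ {⊥, ⊤})
    (A : Subgroup G)
    (hA : A ∈ CD G ∧ A ≠ ⊥ ∧ ∀ X ∈ CD G, X ≠ ⊥ → X ≤ A → X = A) :
    (∀ x ∈ A, ∀ y ∈ A, Commute x y) ∧ A.Normal ∧
      ∃ p q : Nat, p.Prime ∧ q.Prime ∧ p ≠ q ∧ p ∣ Nat.card A ∧ q ∣ Nat.card A := by
  classical
  obtain ⟨hACD, hAne, hAmin⟩ := hA
  have hmA : cdMeasure A = Nat.card G := (CDAux.mem_CD_iff hbot).mp hACD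
  -- if A = ⊤ then CD G = {⊥, ⊤}, contradicting hnotsimple
  have hAnetop : A ≠ ⊤ := by
    intro htop
    apply hnotsimple
    ext X
    constructor
    · intro hX
      by_cases hXbot : X = ⊥
      · exact Or.inl hXbot
      · refine Or.inr ?_
        have hXA : X = A := hAmin X hX hXbot (htop ▸ le_top)
        rw [hXA, htop]
        rfl
    · rintro (rfl | rfl)
      · exact hbot
      · exact htop ▸ hACD
  -- Part A : A is abelian
  have hcomm : ∀ x ∈ A, ∀ y ∈ A, Commute x y := by
    set C := Subgroup.centralizer (A : Set G) with hC
    have hCCD : C ∈ CD G := CDAux.centralizer_mem_CD hbot hACD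
    have hZCD : A ⊓ C ∈ CD G := CDAux.inf_mem_CD hbot hACD hCCD
    by_cases hZ : A ⊓ C = ⊥
    · -- derive a contradiction
      exfalso
      -- the product set A * C is all of G
      have hAC : (A : Set G) * (C : Set G) = Set.univ := by
        have h := CDAux.card_mul_inf A C
        rw [hZ, Subgroup.card_bot, mul_one] at h
        have hcard : Nat.card ((A : Set G) * (C : Set G) : Set G) = Nat.card G := by
          rw [h, ← cdMeasure, hmA]
        apply Set.eq_of_subset_of_ncard_le (Set.subset_univ _)
        rw [Set.ncard_univ, ← Nat.card_coe_set_eq, hcard]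
      have hdecomp : ∀ g : G, ∃ a ∈ A, ∃ c ∈ C, a * c = g := by
        intro g
        have : g ∈ (A : Set G) * (C : Set G) := hAC ▸ Set.mem_univ g
        obtain ⟨a, ha, c, hc, hg⟩ := this
        exact ⟨a, ha, c, hc, hg⟩
      -- A is normal
      have hAnorm : A.Normal := by
        constructor
        intro n hn g
        obtain ⟨a, ha, c, hc, rfl⟩ := hdecomp g
        have hcn : c * n * c⁻¹ = n := by
          have := hc n hn
          rw [← this, mul_assoc, mul_inv_cancel, mul_one]
        have : a * c * n * (a * c)⁻¹ = a * (c * n * c⁻¹) * a⁻¹ := by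
          rw [mul_inv_rev]; group
        rw [this, hcn]
        exact A.mul_mem (A.mul_mem ha hn) (A.inv_mem ha)
      -- C is normal
      have hCnorm : C.Normal := by
        constructor
        intro n hn g
        obtain ⟨a, ha, c, hc, rfl⟩ := hdecomp g
        have hcn : c * n * c⁻¹ ∈ C := C.mul_mem (C.mul_mem hc hn) (C.inv_mem hc)
        have han : a * (c * n * c⁻¹) * a⁻¹ = c * n * c⁻¹ := by
          have h' := hcn a ha
          rw [h']
          group
        have : a * c * n * (a * c)⁻¹ = a * (c * n * c⁻¹) * a⁻¹ := by
          rw [mul_inv_rev]; group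
        rw [this, han]
        exact hcn
      -- the join is everything
      have hjoin : A ⊔ C = ⊤ := by
        rw [Subgroup.eq_top_iff']
        intro g
        obtain ⟨a, ha, c, hc, rfl⟩ := hdecomp g
        exact Subgroup.mul_mem _ ((le_sup_left : A ≤ A ⊔ C) ha)
          ((le_sup_right : C ≤ A ⊔ C) hc)
      by_cases hCbot : C = ⊥
      · -- then |A| = |G| and A = ⊤, contradiction
        apply hAnetop
        apply Subgroup.eq_top_of_card_eq
        have : Nat.card C = 1 := by rw [hCbot]; exact Subgroup.card_bot
        rw [cdMeasure, this, mul_one] at hmA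
        exact hmA
      · exact hindec ⟨A, C, hAne, hCbot, hAnorm, hCnorm, hZ, hjoin⟩
    · -- A ⊓ C = A, so A is abelian
      have hZA : A ⊓ C = A := hAmin _ hZCD hZ inf_le_left
      intro x hx y hy
      have hyAC : y ∈ A ⊓ C := by rw [hZA]; exact hy
      have hyC : y ∈ C := (Subgroup.mem_inf.mp hyAC).2
      show x * y = y * x
      exact hyC x hx
  -- Part B : A is normal
  have hnormal : A.Normal := by
    have hmapA : ∀ g : G, A.map (MulAut.conj g).toMonoidHom = A := by
      intro g
      set B := A.map (MulAut.conj g).toMonoidHom with hB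
      have hBCD : B ∈ CD G := by
        rw [CDAux.mem_CD_iff hbot, CDAux.cdMeasure_map, hmA]
      have hcardB : Nat.card B = Nat.card A := CDAux.card_map_equiv (MulAut.conj g) A
      by_cases hBA : B = A
      · exact hBA
      · exfalso
        -- A ⊓ B = ⊥
        have hinfCD : A ⊓ B ∈ CD G := CDAux.inf_mem_CD hbot hACD hBCD
        have hdisj : A ⊓ B = ⊥ := by
          by_contra hne
          have h1 : A ⊓ B = A := hAmin _ hinfCD hne inf_le_left
          have h2 : A ≤ B := h1 ▸ inf_le_right
          exact hBA (Subgroup.eq_of_le_of_card_ge h2 hcardB.le).symm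
        have hdisj' : B ⊓ A = ⊥ := by rw [inf_comm]; exact hdisj
        -- C(B) * C(A) = G
        have huniv := CDAux.centralizer_prod_eq_univ hbot hBCD hACD hdisj'
        have : g ∈ ((Subgroup.centralizer (B : Set G) : Subgroup G) : Set G) *
            ((Subgroup.centralizer (A : Set G) : Subgroup G) : Set G) :=
          huniv ▸ Set.mem_univ g
        obtain ⟨d, hd, c, hc, hg⟩ := this
        -- every element of B is of the form d * a * d⁻¹ with a ∈ A, and d centralizes B
        apply hBA
        apply Subgroup.eq_of_le_of_card_ge _ hcardB.ge
        intro b hb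
        obtain ⟨a, ha, hab⟩ := Subgroup.mem_map.mp hb
        -- b = g * a * g⁻¹ = d * c * a * c⁻¹ * d⁻¹ = d * a * d⁻¹
        have hca : c * a * c⁻¹ = a := by
          have := (SetLike.mem_coe.mp hc) a (SetLike.mem_coe.mpr ha)
          rw [← this, mul_assoc, mul_inv_cancel, mul_one]
        have hb2 : b = d * a * d⁻¹ := by
          have : b = g * a * g⁻¹ := by
            rw [← hab]; rfl
          rw [this, ← hg]
          rw [mul_inv_rev]
          calc d * c * a * (c⁻¹ * d⁻¹) = d * (c * a * c⁻¹) * d⁻¹ := by group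
            _ = d * a * d⁻¹ := by rw [hca]
        -- d centralizes b, so a = b
        have hdb : b * d = d * b := (SetLike.mem_coe.mp hd) b hb
        have : d * a * d⁻¹ = b := hb2.symm
        have ha2 : a = d⁻¹ * b * d := by
          rw [← this]; group
        have : a = b := by
          rw [ha2, mul_assoc, hdb, ← mul_assoc]
          group
        rw [← this]
        exact ha
    constructor
    intro n hn g
    have := hmapA g
    rw [← this]
    exact Subgroup.mem_map.mpr ⟨n, hn, rfl⟩
  -- Part C : |A| is divisible by two distinct primes
  refine ⟨hcomm, hnormal, ?_⟩
  set C := Subgroup.centralizer (A : Set G) with hCdef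
  have hAC : Nat.card A * Nat.card C = Nat.card G := hmA
  have hA1 : Nat.card A ≠ 1 := by
    intro h
    exact hAne (Subgroup.eq_bot_of_card_eq A h)
  have hA0 : Nat.card A ≠ 0 := Nat.card_pos.ne'
  have hC0 : Nat.card C ≠ 0 := Nat.card_pos.ne'
  set p := (Nat.card A).minFac with hpdef
  have hp : p.Prime := Nat.minFac_prime hA1
  have hpA : p ∣ Nat.card A := Nat.minFac_dvd _
  -- the main claim : |A| is not a power of p
  have hnotpow : ∀ n : ℕ, Nat.card A ≠ p ^ n := by
    intro n hcard
    haveI : Fact p.Prime := ⟨hp⟩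
    haveI := hnormal
    have hApgroup : IsPGroup p A := IsPGroup.of_card hcard
    obtain ⟨P⟩ : Nonempty (Sylow p G) := inferInstance
    -- A ≤ P
    have hAP : A ≤ P.toSubgroup := by
      have hsup : IsPGroup p (A ⊔ P.toSubgroup : Subgroup G) :=
        IsPGroup.to_sup_of_normal_left hApgroup P.isPGroup'
      have heq : A ⊔ P.toSubgroup = P.toSubgroup := P.is_maximal' hsup le_sup_right
      exact le_sup_left.trans_eq heq
    -- find a nontrivial element of A centralized by P
    letI actInst : MulAction P.toSubgroup A :=
      MulAction.compHom _ ((MulAut.conjNormal : G →* MulAut A).comp P.toSubgroup.subtype)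
    have hsmul : ∀ (x : P.toSubgroup) (a : A), x • a = MulAut.conjNormal (x : G) a := fun _ _ => rfl
    have hone : (1 : A) ∈ MulAction.fixedPoints P.toSubgroup A := by
      intro x
      rw [hsmul]
      exact map_one (MulAut.conjNormal (x : G))
    obtain ⟨b, hbfix, hbne⟩ :=
      P.isPGroup'.exists_fixed_point_of_prime_dvd_card_of_fixed_point A hpA hone
    have hbA : (b : G) ∈ A := b.2
    have hbone : (b : G) ≠ 1 := by
      intro h
      exact hbne (Subtype.ext h.symm)
    have hPb : ∀ x ∈ P.toSubgroup, x * (b : G) * x⁻¹ = (b : G) := by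
      intro x hx
      have := hbfix ⟨x, hx⟩
      rw [hsmul] at this
      have := congrArg (Subtype.val : A → G) this
      rw [MulAut.conjNormal_apply] at this
      exact this
    -- P * C = G
    have hPC : ((P.toSubgroup : Subgroup G) : Set G) * ((C : Subgroup G) : Set G) =
        Set.univ := by
      -- |P ⊓ C| * |A| ≤ |P|
      obtain ⟨m, hm⟩ := IsPGroup.iff_card.mp (P.isPGroup'.to_inf_left (K := C))
      have hdvd : p ^ m ∣ Nat.card C := hm ▸ Subgroup.card_dvd_of_le inf_le_right
      have hmle : m ≤ (Nat.card C).factorization p :=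
        (Nat.Prime.pow_dvd_iff_le_factorization hp hC0).mp hdvd
      have hPcard : Nat.card P.toSubgroup = p ^ (Nat.card G).factorization p := by
        have := P.card_eq_multiplicity
        exact this
      have hfact : (Nat.card G).factorization p = n + (Nat.card C).factorization p := by
        rw [← hAC, Nat.factorization_mul hA0 hC0, Finsupp.add_apply, hcard,
          hp.factorization_pow, Finsupp.single_eq_same]
      have hineq : Nat.card (P.toSubgroup ⊓ C : Subgroup G) * Nat.card A ≤
          Nat.card P.toSubgroup := by
        rw [hm, hcard, hPcard, hfact, ← pow_add]
        exact Nat.pow_le_pow_right hp.pos (by omega)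
      have h := CDAux.card_mul_inf P.toSubgroup C
      have hbig : Nat.card G * Nat.card (P.toSubgroup ⊓ C : Subgroup G) ≤
          Nat.card ((P.toSubgroup : Set G) * (C : Set G) : Set G) *
            Nat.card (P.toSubgroup ⊓ C : Subgroup G) := by
        rw [h]
        calc Nat.card G * Nat.card (P.toSubgroup ⊓ C : Subgroup G)
            = Nat.card (P.toSubgroup ⊓ C : Subgroup G) * Nat.card A * Nat.card C := by
              rw [← hAC]; ring
          _ ≤ Nat.card P.toSubgroup * Nat.card C := Nat.mul_le_mul hineq le_rfl
      have hX : Nat.card G ≤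
          Nat.card ((P.toSubgroup : Set G) * (C : Set G) : Set G) := by
        have hposinf : 0 < Nat.card (P.toSubgroup ⊓ C : Subgroup G) := Nat.card_pos
        exact Nat.le_of_mul_le_mul_right
          (by rw [mul_comm (Nat.card G)] at hbig; rw [mul_comm]; exact hbig) hposinf
      apply Set.eq_of_subset_of_ncard_le (Set.subset_univ _)
      rw [Set.ncard_univ, ← Nat.card_coe_set_eq]
      exact hX
    -- b is central in G
    have hbcent : (b : G) ∈ Subgroup.center G := by
      rw [Subgroup.mem_center_iff]
      intro g
      have : g ∈ ((P.toSubgroup : Subgroup G) : Set G) * ((C : Subgroup G) : Set G) :=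
        hPC ▸ Set.mem_univ g
      obtain ⟨x, hx, c, hc, rfl⟩ := this
      have hcb : c * (b : G) * c⁻¹ = (b : G) := by
        have := (SetLike.mem_coe.mp hc) (b : G) (SetLike.mem_coe.mpr hbA)
        rw [← this, mul_assoc, mul_inv_cancel, mul_one]
      have hxb : x * (b : G) * x⁻¹ = (b : G) := hPb x (SetLike.mem_coe.mp hx)
      have : (x * c) * (b : G) * (x * c)⁻¹ = (b : G) := by
        rw [mul_inv_rev]
        calc x * c * (b : G) * (c⁻¹ * x⁻¹) = x * (c * (b : G) * c⁻¹) * x⁻¹ := by group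
          _ = x * (b : G) * x⁻¹ := by rw [hcb]
          _ = (b : G) := hxb
      calc (x * c) * (b : G) = (x * c) * (b : G) * (x * c)⁻¹ * (x * c) := by group
        _ = (b : G) * (x * c) := by rw [this]
    -- the center is trivial
    have hcenter : Subgroup.center G = ⊥ := by
      have htop : cdMeasure (⊤ : Subgroup G) ≤ Nat.card G := CDAux.cdMeasure_le hbot ⊤
      have : cdMeasure (⊤ : Subgroup G) = Nat.card G * Nat.card (Subgroup.center G) := by
        rw [cdMeasure, Subgroup.card_top, Subgroup.coe_top, Subgroup.centralizer_univ]
      rw [this] at htop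
      have hle1 : Nat.card (Subgroup.center G) ≤ 1 := by
        by_contra hgt
        push_neg at hgt
        have h2 : Nat.card G * 2 ≤ Nat.card G * Nat.card (Subgroup.center G) :=
          Nat.mul_le_mul le_rfl hgt
        have h3 : 0 < Nat.card G := Nat.card_pos
        omega
      exact Subgroup.eq_bot_of_card_le _ hle1
    rw [hcenter] at hbcent
    exact hbone (Subgroup.mem_bot.mp hbcent)
  -- conclude : there are two distinct primes dividing |A|
  by_contra hcon
  push_neg at hcon
  have huniq : ∀ {d : ℕ}, d.Prime → d ∣ Nat.card A → d = p := by
    intro d hd hdvd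
    by_contra hdp
    exact (hcon p d hp hd (fun h => hdp h.symm) hpA) hdvd
  exact hnotpow _ (Nat.eq_prime_pow_of_unique_prime_dvd hA0 huniq)
end
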